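/- arXiv:2510.19591 — 2 statements merged into one kernel-verified Lean document; each statement's English description precedes it below -/
import Mathlib

section
/- In the discriminatory price auction, the expected utility of bidding b against a random adversary bid vector β with marginal CDFs F_k(x) = P(β_k ≤ x) equals the sum over i from 1 to K of F_{K-i+1}(b_i)·(v_i - b_i). Formally, E[Σ_{i=1}^{x(b,β)} (v_i - b_i)] = Σ_{i=1}^K P(β_{K-i+1} ≤ b_i)·(v_i - b_i). -/
/-! Along `i = 1, …, K` the bid `b_i` decreases while the opposing bid `β_{K-i+1}` increases, so
the condition `β_{K-i+1} ≤ b_i` for winning the `i`-th item implies the same condition for every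
earlier item. Hence the items won are exactly `{i ≤ K | β_{K-i+1} ≤ b_i}`, the utility is a sum of
constants times indicators of these events, and linearity of expectation gives the formula. -/

open scoped Classical
open MeasureTheory

/-- Allocation in the K-item standard auction. -/
noncomputable def alloc (K : ℕ) (b β : ℕ → ℝ) : ℕ :=
  Nat.findGreatest (fun k => ∀ j, 1 ≤ j → j ≤ k → β (K + 1 - j) ≤ b j) K

theorem Nat.le_findGreatest_iff_of_antitone {P : ℕ → Prop} [DecidablePred P] (hP : Antitone P)
    {m n : ℕ} (hm : 0 < m) (hmn : m ≤ n) : m ≤ Nat.findGreatest P n ↔ P m :=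
  ⟨fun h => hP h (Nat.findGreatest_of_ne_zero rfl (by omega)), Nat.le_findGreatest hmn⟩

/-- `alloc` carries the `Classical.propDecidable` instance, while instance search finds
`Nat.decidableLoHiLe`: lemmas about `Nat.findGreatest` apply to `alloc` only after this rewrite. -/
theorem alloc_eq_findGreatest (K : ℕ) (b γ : ℕ → ℝ)
    [DecidablePred fun k => ∀ j, 1 ≤ j → j ≤ k → γ (K + 1 - j) ≤ b j] :
    alloc K b γ = Nat.findGreatest (fun k => ∀ j, 1 ≤ j → j ≤ k → γ (K + 1 - j) ≤ b j) K := by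
  unfold alloc
  congr

theorem alloc_le (K : ℕ) (b γ : ℕ → ℝ) : alloc K b γ ≤ K := by
  rw [alloc_eq_findGreatest]
  exact Nat.findGreatest_le K

theorem le_alloc_iff {K : ℕ} {b γ : ℕ → ℝ}
    (hb : ∀ i j, 1 ≤ i → i ≤ j → j ≤ K → b j ≤ b i)
    (hγ : ∀ i j, 1 ≤ i → i ≤ j → j ≤ K → γ j ≤ γ i)
    {i : ℕ} (hi : 1 ≤ i) (hiK : i ≤ K) :
    i ≤ alloc K b γ ↔ γ (K - i + 1) ≤ b i := by
  rw [alloc_eq_findGreatest, Nat.le_findGreatest_iff_of_antitone ?antitone hi hiK,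
    show K - i + 1 = K + 1 - i by omega]
  case antitone => exact fun k l hkl h j hj hjl => h j hj (hjl.trans hkl)
  refine ⟨fun h => h i hi le_rfl, fun h j hj hji => ?_⟩
  calc γ (K + 1 - j) ≤ γ (K + 1 - i) := hγ _ _ (by omega) (by omega) (by omega)
    _ ≤ b i := h
    _ ≤ b j := hb j i hj hji hiK

theorem Icc_alloc_eq_filter {K : ℕ} {b γ : ℕ → ℝ}
    (hb : ∀ i j, 1 ≤ i → i ≤ j → j ≤ K → b j ≤ b i)
    (hγ : ∀ i j, 1 ≤ i → i ≤ j → j ≤ K → γ j ≤ γ i) :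
    Finset.Icc 1 (alloc K b γ) = {i ∈ Finset.Icc 1 K | γ (K - i + 1) ≤ b i} := by
  ext i
  simp only [Finset.mem_filter, Finset.mem_Icc]
  constructor
  · rintro ⟨hi, hi_alloc⟩
    have hiK := hi_alloc.trans (alloc_le K b γ)
    exact ⟨⟨hi, hiK⟩, (le_alloc_iff hb hγ hi hiK).1 hi_alloc⟩
  · rintro ⟨⟨hi, hiK⟩, hwin⟩
    exact ⟨hi, (le_alloc_iff hb hγ hi hiK).2 hwin⟩

theorem integral_finset_sum_indicator_const {Ω ι E : Type*} [MeasurableSpace Ω]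
    [NormedAddCommGroup E] [NormedSpace ℝ E] [CompleteSpace E]
    (μ : Measure Ω) [IsFiniteMeasure μ] (s : Finset ι) {S : ι → Set Ω}
    (hS : ∀ i, MeasurableSet (S i)) (c : ι → E) :
    ∫ ω, ∑ i ∈ s, (S i).indicator (fun _ => c i) ω ∂μ = ∑ i ∈ s, μ.real (S i) • c i := by
  rw [integral_finsetSum s fun i _ => (integrable_const (c i)).indicator (hS i)]
  exact Finset.sum_congr rfl fun i _ => integral_indicator_const (c i) (hS i)

theorem discriminatory_expected_utility_general
    {Ω : Type*} [MeasurableSpace Ω] (μ : Measure Ω) [IsProbabilityMeasure μ]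
    (K : ℕ) (v b : ℕ → ℝ) (β : Ω → ℕ → ℝ)
    (hmeas : ∀ k, Measurable fun ω => β ω k)
    (hb : ∀ i j, 1 ≤ i → i ≤ j → j ≤ K → b j ≤ b i)
    (hβ : ∀ ω, ∀ i j, 1 ≤ i → i ≤ j → j ≤ K → β ω j ≤ β ω i) :
    ∫ ω, (∑ i ∈ Finset.Icc 1 (alloc K b (β ω)), (v i - b i)) ∂μ
      = ∑ i ∈ Finset.Icc 1 K, (μ {ω | β ω (K - i + 1) ≤ b i}).toReal * (v i - b i) := by
  have hutility : ∀ ω, ∑ i ∈ Finset.Icc 1 (alloc K b (β ω)), (v i - b i)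
      = ∑ i ∈ Finset.Icc 1 K, {ω | β ω (K - i + 1) ≤ b i}.indicator (fun _ => v i - b i) ω := by
    intro ω
    rw [Icc_alloc_eq_filter hb (hβ ω), Finset.sum_filter]
    simp only [Set.indicator_apply, Set.mem_ofPred_eq]
  simp_rw [hutility]
  exact integral_finset_sum_indicator_const μ _
    (fun i => measurableSet_le (hmeas _) measurable_const) _

/-- In the discriminatory price auction, the expected utility of bidding `b`
equals `∑_{i=1}^K F_{K-i+1}(b_i) (v_i - b_i)` where `F_k` is the marginal CDF
of the adversary's k-th (sorted) bid. -/
theorem discriminatory_expected_utility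
    {Ω : Type*} [MeasurableSpace Ω] (μ : Measure Ω) [IsProbabilityMeasure μ]
    (K : ℕ) (v b : ℕ → ℝ) (β : Ω → ℕ → ℝ)
    (hmeas : ∀ k, Measurable fun ω => β ω k)
    (hv : ∀ i j, 1 ≤ i → i ≤ j → j ≤ K → v j ≤ v i)
    (hv01 : ∀ i, 1 ≤ i → i ≤ K → v i ∈ Set.Icc (0:ℝ) 1)
    (hb : ∀ i j, 1 ≤ i → i ≤ j → j ≤ K → b j ≤ b i)
    (hb01 : ∀ i, 1 ≤ i → i ≤ K → b i ∈ Set.Icc (0:ℝ) 1)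
    (hβ : ∀ ω, ∀ i j, 1 ≤ i → i ≤ j → j ≤ K → β ω j ≤ β ω i)
    (hβ01 : ∀ ω, ∀ i, 1 ≤ i → i ≤ K → β ω i ∈ Set.Icc (0:ℝ) 1) :
    ∫ ω, (∑ i ∈ Finset.Icc 1 (alloc K b (β ω)), (v i - b i)) ∂μ
      = ∑ i ∈ Finset.Icc 1 K, (μ {ω | β ω (K - i + 1) ≤ b i}).toReal * (v i - b i) :=
  discriminatory_expected_utility_general μ K v b β hmeas hb hβ
end

section
/- Let F(b) = 1/(3(1−b)) for b ∈ [0, 1/3) and F(b) = 1/4 + 3b/4 for b ∈ [1/3, 1]. Then F is a valid CDF on [0,1] (non-decreasing, F(0) = 1/3 > 0 allowed as an atom at 0, F(1) = 1), and the first-price-auction expected utility G(b) := F(b)·(1 − b) (valuation v = 1) is constant and equal to 1/3 on [0, 1/3] and strictly decreasing on [1/3, 1]. -/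
/-- The base adversary CDF for the hard first-price instance. -/
noncomputable def Fbase (b : ℝ) : ℝ :=
  if b < 1/3 then 1 / (3 * (1 - b)) else 1/4 + 3 * b / 4

/-! The two pieces of `Fbase` meet at `b = 1/3` with common value `1/2`, so `Fbase` is monotone on
all of `ℝ`. On the hyperbolic piece the utility `Fbase b * (1 - b)` is identically `1/3`, and on the
linear piece it is the concave quadratic `(1 + 3b)(1 - b)/4`, whose vertex lies at `b = 1/3`. -/

namespace Fbase

theorem of_lt {b : ℝ} (hb : b < 1/3) : Fbase b = 1 / (3 * (1 - b)) := if_pos hb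

theorem of_le {b : ℝ} (hb : 1/3 ≤ b) : Fbase b = 1/4 + 3 * b / 4 := if_neg hb.not_gt

theorem monotone : Monotone Fbase := by
  intro x y hxy
  rcases lt_or_ge x (1/3) with hx | hx <;> rcases lt_or_ge y (1/3) with hy | hy
  · rw [of_lt hx, of_lt hy]
    gcongr
    linarith
  · have hx_le_half : 1 / (3 * (1 - x)) ≤ 1/2 := by
      rw [div_le_iff₀ (by linarith)]
      linarith
    rw [of_lt hx, of_le hy]
    linarith
  · exact absurd (hxy.trans_lt hy) hx.not_gt
  · rw [of_le hx, of_le hy]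
    linarith

theorem mul_one_sub_of_le {b : ℝ} (hb : b ≤ 1/3) : Fbase b * (1 - b) = 1/3 := by
  rcases hb.lt_or_eq with hb | rfl
  · rw [of_lt hb]
    field_simp [show 1 - b ≠ 0 by linarith]
  · norm_num [of_le le_rfl]

theorem strictAntiOn_mul_one_sub : StrictAntiOn (fun b => Fbase b * (1 - b)) (Set.Ici (1/3)) := by
  intro x (hx : 1/3 ≤ x) y (hy : 1/3 ≤ y) hxy
  simp only [of_le hx, of_le hy]
  -- the difference factors as `(y - x) (3 (x + y) - 2) / 4`
  nlinarith

end Fbase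

/-- `Fbase` is a valid CDF on `[0,1]` (non-decreasing, `F 0 = 1/3`, `F 1 = 1`) and
the first-price expected utility `F(b)(1-b)` is constant equal to `1/3` on `[0, 1/3]`
and strictly decreasing on `[1/3, 1]`. -/
theorem base_instance_properties :
    MonotoneOn Fbase (Set.Icc (0:ℝ) 1)
    ∧ Fbase 0 = 1/3
    ∧ Fbase 1 = 1
    ∧ (∀ b ∈ Set.Icc (0:ℝ) (1/3), Fbase b * (1 - b) = 1/3)
    ∧ StrictAntiOn (fun b : ℝ => Fbase b * (1 - b)) (Set.Icc (1/3 : ℝ) 1) := by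
  refine ⟨Fbase.monotone.monotoneOn _, ?_, ?_, fun b hb => Fbase.mul_one_sub_of_le hb.2,
    Fbase.strictAntiOn_mul_one_sub.mono Set.Icc_subset_Ici_self⟩
  · norm_num [Fbase.of_lt]
  · norm_num [Fbase.of_le]
end
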